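/- Let X be a K-subgaussian real random variable (with K ≥ 1), Z an independent standard Gaussian, and Y_t = √(1-t²)X + tZ for 0 < t ≤ 1. Then the density ρ of Y_t satisfies ρ(x) ≤ (3/(√(2π) t)) e^{-x²/(8K²)} for all x. -/

import Mathlib

/-! The law of `Y_t` is `ν ∗ 𝒩(0, t²)`, with `ν` the law of `√(1-t²) X`, so `Y_t` has density
`ρ(x) = ∫ φ_{t²}(x - a) dν(a)`. Split the means at `|a| = |x|/2`. Those with `|a| ≥ |x|/2` have
`ν`-mass at most `2e^{-x²/(4K²)}` (as `|√(1-t²) X| ≤ |X|`), and there `φ_{t²} ≤ 1/(√(2π) t)`. For the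
others `|x - a| ≥ |x|/2`, so `φ_{t²}(x - a) ≤ e^{-x²/(8t²)}/(√(2π) t) ≤ e^{-x²/(8K²)}/(√(2π) t)`
since `t ≤ 1 ≤ K`. -/

open MeasureTheory ProbabilityTheory Real
open scoped ENNReal NNReal

/-- A real random variable `X` is `K`-subgaussian if `P(|X| ≥ s) ≤ 2 e^{-s²/K²}` for all `s > 0`. -/
def IsSubgaussianRV {Ω : Type*} [MeasureSpace Ω] (X : Ω → ℝ) (K : ℝ) : Prop :=
  ∀ s : ℝ, 0 < s → (ℙ {ω | s ≤ |X ω|}) ≤ ENNReal.ofReal (2 * Real.exp (-s ^ 2 / K ^ 2))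

theorem MeasureTheory.Measure.conv_withDensity_eq {G : Type*} [AddCommGroup G] [MeasurableSpace G]
    [MeasurableAdd₂ G] [MeasurableNeg G] {ν : Measure G} [SFinite ν] [ν.IsAddLeftInvariant]
    (μ : Measure G) [SFinite μ] {g : G → ℝ≥0∞} (hg : Measurable g) :
    μ ∗ ν.withDensity g = ν.withDensity fun x ↦ ∫⁻ a, g (x - a) ∂μ := by
  have hgm : Measurable fun p : G × G ↦ g (p.2 - p.1) := by fun_prop
  refine ext_of_lintegral _ fun φ hφ ↦ ?_
  rw [lintegral_conv hφ, lintegral_withDensity_eq_lintegral_mul _ hgm.lintegral_prod_left' hφ]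
  calc ∫⁻ a, ∫⁻ y, φ (a + y) ∂ν.withDensity g ∂μ
      = ∫⁻ a, ∫⁻ z, g (z - a) * φ z ∂ν ∂μ := by
        refine lintegral_congr fun a ↦ ?_
        rw [lintegral_withDensity_eq_lintegral_mul _ hg (by fun_prop)]
        simpa using lintegral_add_left_eq_self (fun z ↦ g (z - a) * φ z) a
    _ = ∫⁻ z, ∫⁻ a, g (z - a) * φ z ∂μ ∂ν :=
        lintegral_lintegral_swap (hgm.mul (hφ.comp measurable_snd)).aemeasurable
    _ = ∫⁻ z, ((fun x ↦ ∫⁻ a, g (x - a) ∂μ) * φ) z ∂ν :=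
        lintegral_congr fun z ↦ lintegral_mul_const _ (by fun_prop)

theorem ProbabilityTheory.conv_gaussianReal_eq_withDensity (μ : Measure ℝ) [SFinite μ]
    {v : ℝ≥0} (hv : v ≠ 0) :
    μ ∗ gaussianReal 0 v = volume.withDensity fun x ↦ ∫⁻ a, gaussianPDF a v x ∂μ := by
  simp only [gaussianReal_of_var_ne_zero 0 hv,
    Measure.conv_withDensity_eq μ (measurable_gaussianPDF 0 v), gaussianPDF, gaussianPDFReal_sub,
    zero_add]

lemma ProbabilityTheory.gaussianPDFReal_le (m : ℝ) (v : ℝ≥0) (x : ℝ) :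
    gaussianPDFReal m v x ≤ (√(2 * π * v))⁻¹ := by
  have : rexp (-(x - m) ^ 2 / (2 * v)) ≤ 1 := exp_le_one_iff.2 <|
    div_nonpos_of_nonpos_of_nonneg (neg_nonpos.2 (sq_nonneg _)) (by positivity)
  simpa [gaussianPDFReal] using mul_le_of_le_one_right (by positivity) this

lemma ProbabilityTheory.gaussianPDFReal_le_of_abs_le_half {m x : ℝ} (v : ℝ≥0)
    (h : |m| ≤ |x| / 2) :
    gaussianPDFReal m v x ≤ (√(2 * π * v))⁻¹ * rexp (-x ^ 2 / (8 * v)) := by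
  have hsq : x ^ 2 / 4 ≤ (x - m) ^ 2 := by
    have : |x| / 2 ≤ |x - m| := by linarith [abs_sub_abs_le_abs_sub x m]
    nlinarith [sq_abs x, sq_abs (x - m), abs_nonneg x]
  have : -(x - m) ^ 2 / (2 * v) ≤ -x ^ 2 / (8 * v) := by
    rw [show -x ^ 2 / (8 * v) = -(x ^ 2 / 4) / (2 * v) by ring]
    exact div_le_div_of_nonneg_right (by linarith) (by positivity)
  unfold gaussianPDFReal
  gcongr

lemma ProbabilityTheory.lintegral_gaussianPDF_le (μ : Measure ℝ) (v : ℝ≥0) (x : ℝ) :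
    ∫⁻ a, gaussianPDF a v x ∂μ ≤ ENNReal.ofReal (√(2 * π * v))⁻¹ *
      (μ {a | |x| / 2 ≤ |a|} + ENNReal.ofReal (rexp (-x ^ 2 / (8 * v))) * μ Set.univ) := by
  set A := {a : ℝ | |x| / 2 ≤ |a|}
  have hA : MeasurableSet A := measurableSet_le measurable_const (by fun_prop)
  have h_tail : ∫⁻ a in A, gaussianPDF a v x ∂μ ≤ ENNReal.ofReal (√(2 * π * v))⁻¹ * μ A := by
    rw [← setLIntegral_const]
    exact setLIntegral_mono measurable_const fun a _ ↦
      ENNReal.ofReal_le_ofReal (gaussianPDFReal_le a v x)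
  have h_bulk : ∫⁻ a in Aᶜ, gaussianPDF a v x ∂μ ≤
      ENNReal.ofReal ((√(2 * π * v))⁻¹ * rexp (-x ^ 2 / (8 * v))) * μ Set.univ := by
    calc ∫⁻ a in Aᶜ, gaussianPDF a v x ∂μ
        ≤ ∫⁻ _ in Aᶜ, ENNReal.ofReal ((√(2 * π * v))⁻¹ * rexp (-x ^ 2 / (8 * v))) ∂μ :=
          setLIntegral_mono measurable_const fun a (ha : ¬|x| / 2 ≤ |a|) ↦ ENNReal.ofReal_le_ofReal <|
            gaussianPDFReal_le_of_abs_le_half v (not_le.1 ha).le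
      _ ≤ _ := by rw [setLIntegral_const]; gcongr; exact Set.subset_univ _
  calc ∫⁻ a, gaussianPDF a v x ∂μ
      = ∫⁻ a in A, gaussianPDF a v x ∂μ + ∫⁻ a in Aᶜ, gaussianPDF a v x ∂μ :=
        (lintegral_add_compl _ hA).symm
    _ ≤ _ := by
        rw [mul_add, ← mul_assoc, ← ENNReal.ofReal_mul (by positivity)]
        exact add_le_add h_tail h_bulk

lemma ProbabilityTheory.lintegral_gaussianPDF_le_of_tail (μ : Measure ℝ) [IsProbabilityMeasure μ]
    {K : ℝ} {v : ℝ≥0} (hv : 0 < v) (hvK : (v : ℝ) ≤ K ^ 2)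
    (htail : ∀ s, 0 < s → μ {a | s ≤ |a|} ≤ ENNReal.ofReal (2 * rexp (-s ^ 2 / K ^ 2))) (x : ℝ) :
    ∫⁻ a, gaussianPDF a v x ∂μ ≤
      ENNReal.ofReal (3 / √(2 * π * v) * rexp (-x ^ 2 / (8 * K ^ 2))) := by
  have hK : 0 < K ^ 2 := lt_of_lt_of_le (by exact_mod_cast hv) hvK
  have h_tail : μ {a | |x| / 2 ≤ |a|} ≤ ENNReal.ofReal (2 * rexp (-x ^ 2 / (8 * K ^ 2))) := by
    rcases eq_or_ne x 0 with rfl | hx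
    · simp
    refine (htail _ (by positivity)).trans (ENNReal.ofReal_le_ofReal ?_)
    have : -(|x| / 2) ^ 2 / K ^ 2 ≤ -x ^ 2 / (8 * K ^ 2) := by
      rw [div_pow, sq_abs, div_le_div_iff₀ hK (by positivity)]
      nlinarith [mul_nonneg (sq_nonneg x) hK.le]
    gcongr
  have h_bulk : rexp (-x ^ 2 / (8 * v)) ≤ rexp (-x ^ 2 / (8 * K ^ 2)) := by
    rw [neg_div, neg_div]
    gcongr
  calc ∫⁻ a, gaussianPDF a v x ∂μ
      ≤ ENNReal.ofReal (√(2 * π * v))⁻¹ * (ENNReal.ofReal (2 * rexp (-x ^ 2 / (8 * K ^ 2))) +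
          ENNReal.ofReal (rexp (-x ^ 2 / (8 * K ^ 2)))) := by
        refine (lintegral_gaussianPDF_le μ v x).trans ?_
        rw [measure_univ, mul_one]
        gcongr
    _ = _ := by
        rw [← ENNReal.ofReal_add (by positivity) (by positivity),
          ← ENNReal.ofReal_mul (by positivity)]
        ring_nf

theorem IsSubgaussianRV.const_mul {Ω : Type*} [MeasureSpace Ω] {X : Ω → ℝ} {K : ℝ}
    (hX : IsSubgaussianRV X K) {c : ℝ} (hc : |c| ≤ 1) : IsSubgaussianRV (fun ω ↦ c * X ω) K :=
  fun s hs ↦ (measure_mono fun ω (h : s ≤ |c * X ω|) ↦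
    h.trans (by rw [abs_mul]; exact mul_le_of_le_one_left (abs_nonneg _) hc)).trans (hX s hs)

theorem IsSubgaussianRV.map_apply_le {Ω : Type*} [MeasureSpace Ω] {X : Ω → ℝ} {K : ℝ}
    (hX : IsSubgaussianRV X K) (hXm : AEMeasurable X) {s : ℝ} (hs : 0 < s) :
    (Measure.map X ℙ) {a | s ≤ |a|} ≤ ENNReal.ofReal (2 * rexp (-s ^ 2 / K ^ 2)) := by
  rw [Measure.map_apply_of_aemeasurable hXm (measurableSet_le measurable_const (by fun_prop))]
  exact hX s hs

theorem ProbabilityTheory.IndepFun.map_add_const_mul_eq_conv_gaussianReal {Ω : Type*}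
    [MeasurableSpace Ω] {P : Measure Ω} [IsProbabilityMeasure P] {X Z : Ω → ℝ}
    (hXZ : IndepFun X Z P) (hX : AEMeasurable X P) (hZ : P.map Z = gaussianReal 0 1) (t : ℝ) :
    P.map (fun ω ↦ X ω + t * Z ω) = P.map X ∗ gaussianReal 0 (.mk (t ^ 2) (sq_nonneg t)) := by
  have hZm : AEMeasurable Z P := aemeasurable_of_map_neZero (by rw [hZ]; infer_instance)
  have h_tZ : P.map (fun ω ↦ t * Z ω) = gaussianReal 0 (.mk (t ^ 2) (sq_nonneg t)) := by
    change P.map ((t * ·) ∘ Z) = _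
    rw [← AEMeasurable.map_map_of_aemeasurable (by fun_prop) hZm, hZ, gaussianReal_map_const_mul]
    simp
  rw [← h_tZ]
  exact (hXZ.comp measurable_id (measurable_const_mul t)).map_add_eq_map_conv_map₀ hX (by fun_prop)

/-- Density upper bound after Gaussian smoothing: if `X` is `K`-subgaussian (`K ≥ 1`), `Z`
is an independent standard Gaussian and `Y_t = √(1-t²)X + tZ` with `0 < t ≤ 1`, then `Y_t`
has a density `ρ` with `ρ(x) ≤ (3/(√(2π)t)) e^{-x²/(8K²)}` for all `x`. -/
theorem density_upper_bound
    {Ω : Type*} [MeasureSpace Ω] [IsProbabilityMeasure (ℙ : Measure Ω)]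
    (X Z : Ω → ℝ) (K t : ℝ) (hK : 1 ≤ K) (ht : 0 < t) (ht1 : t ≤ 1)
    (hXmeas : Measurable X)
    (hXsub : IsSubgaussianRV X K)
    (hZ : Measure.map Z ℙ = gaussianReal 0 1)
    (hindep : IndepFun X Z ℙ) :
    ∃ ρ : ℝ → ℝ,
      Measure.map (fun ω => Real.sqrt (1 - t ^ 2) * X ω + t * Z ω) ℙ
        = volume.withDensity (fun x => ENNReal.ofReal (ρ x))
      ∧ ∀ x : ℝ,
          ρ x ≤ (3 / (Real.sqrt (2 * Real.pi) * t)) * Real.exp (-x ^ 2 / (8 * K ^ 2)) := by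
  set c := √(1 - t ^ 2)
  set v : ℝ≥0 := .mk (t ^ 2) (sq_nonneg t)
  set ν := Measure.map (fun ω ↦ c * X ω) ℙ
  have hv : 0 < v := by change 0 < t ^ 2; positivity
  have hc : |c| ≤ 1 := by
    rw [abs_of_nonneg (Real.sqrt_nonneg _)]
    exact Real.sqrt_le_one.2 (by nlinarith)
  have h_law : Measure.map (fun ω ↦ c * X ω + t * Z ω) ℙ = ν ∗ gaussianReal 0 v :=
    (hindep.comp (measurable_const_mul c) measurable_id).map_add_const_mul_eq_conv_gaussianReal
      (by fun_prop) hZ t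
  have := Measure.isProbabilityMeasure_map (μ := ℙ) (hXmeas.const_mul c).aemeasurable
  have h_density := fun x ↦ lintegral_gaussianPDF_le_of_tail ν hv
    (by change t ^ 2 ≤ K ^ 2; gcongr; linarith)
    (fun s hs ↦ (hXsub.const_mul hc).map_apply_le (by fun_prop) hs) x
  have h_sqrt : √(2 * π * v) = √(2 * π) * t := by
    change √(2 * π * t ^ 2) = _
    rw [Real.sqrt_mul (by positivity), Real.sqrt_sq ht.le]
  rw [h_sqrt] at h_density
  refine ⟨fun x ↦ (∫⁻ a, gaussianPDF a v x ∂ν).toReal, ?_,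
    fun x ↦ ENNReal.toReal_le_of_le_ofReal (by positivity) (h_density x)⟩
  rw [h_law, conv_gaussianReal_eq_withDensity ν hv.ne']
  congr with x
  rw [ENNReal.ofReal_toReal (ne_top_of_le_ne_top ENNReal.ofReal_ne_top (h_density x))]
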